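/- With the setup of the unique synchronization function f satisfying f(φ(x)) = F(f(x), ω(x)) and F ρ-contracting in the state for ρ < 1: if additionally ω is continuous, φ is a homeomorphism, M is compact, and F is continuous, then f is continuous. -/

import Mathlib

/-!
Writing the invariance equation as `f = T f` with `(T g) x = F (g (φ⁻¹ x)) (ω (φ⁻¹ x))`, the
operator `T` preserves continuity and contracts the sup-distance by `ρ`. Hence the iterates of
`T` on a constant map are continuous and converge uniformly to `f` at rate `ρ ^ n * diam K`,
so `f` is continuous.
-/

open Filter Topology

section SyncStep

variable {M K U : Type*}

def syncStep (ψ : M → M) (ω : M → U) (F : K → U → K) (g : M → K) : M → K :=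
  fun x => F (g (ψ x)) (ω (ψ x))

variable {ψ : M → M} {ω : M → U} {F : K → U → K}

theorem syncStep_symm_eq_self {φ : M ≃ M} {f : M → K}
    (hf : ∀ x, f (φ x) = F (f x) (ω x)) : syncStep φ.symm ω F f = f := by
  funext x
  simpa [syncStep] using (hf (φ.symm x)).symm

theorem continuous_iterate_syncStep [TopologicalSpace M] [TopologicalSpace K] [TopologicalSpace U]
    (hψ : Continuous ψ) (hω : Continuous ω)
    (hF : Continuous fun p : K × U => F p.1 p.2) {g : M → K} (hg : Continuous g) (n : ℕ) :
    Continuous ((syncStep ψ ω F)^[n] g) := by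
  induction n with
  | zero => exact hg
  | succ n ih =>
    rw [Function.iterate_succ_apply']
    exact hF.comp ((ih.comp hψ).prodMk (hω.comp hψ))

variable [PseudoMetricSpace K]

theorem dist_iterate_syncStep_le {ρ C : ℝ} (hρ0 : 0 ≤ ρ)
    (hcontr : ∀ u h h', dist (F h u) (F h' u) ≤ ρ * dist h h') {g g' : M → K}
    (hC : ∀ x, dist (g x) (g' x) ≤ C) (n : ℕ) (x : M) :
    dist ((syncStep ψ ω F)^[n] g x) ((syncStep ψ ω F)^[n] g' x) ≤ ρ ^ n * C := by
  induction n generalizing x with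
  | zero => simpa using hC x
  | succ n ih =>
    simp only [Function.iterate_succ_apply']
    calc _ ≤ ρ * dist ((syncStep ψ ω F)^[n] g (ψ x)) ((syncStep ψ ω F)^[n] g' (ψ x)) :=
          hcontr _ _ _
      _ ≤ ρ * (ρ ^ n * C) := mul_le_mul_of_nonneg_left (ih _) hρ0
      _ = ρ ^ (n + 1) * C := by ring

theorem tendstoUniformly_iterate_syncStep {ρ C : ℝ} (hρ0 : 0 ≤ ρ) (hρ1 : ρ < 1)
    (hcontr : ∀ u h h', dist (F h u) (F h' u) ≤ ρ * dist h h') {f g : M → K}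
    (hf : syncStep ψ ω F f = f) (hC : ∀ x, dist (f x) (g x) ≤ C) :
    TendstoUniformly (fun n => (syncStep ψ ω F)^[n] g) f atTop := by
  have hlim : Tendsto (fun n => ρ ^ n * C) atTop (𝓝 0) := by
    simpa using (tendsto_pow_atTop_nhds_zero_of_lt_one hρ0 hρ1).mul_const C
  rw [Metric.tendstoUniformly_iff]
  intro ε hε
  filter_upwards [hlim.eventually (gt_mem_nhds hε)] with n hn x
  have hfix : (syncStep ψ ω F)^[n] f = f := Function.iterate_fixed hf n
  calc dist (f x) ((syncStep ψ ω F)^[n] g x)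
      = dist ((syncStep ψ ω F)^[n] f x) ((syncStep ψ ω F)^[n] g x) := by rw [hfix]
    _ ≤ ρ ^ n * C := dist_iterate_syncStep_le hρ0 hcontr hC n x
    _ < ε := hn

end SyncStep

theorem synchronization_function_continuous_general
    {M K : Type*} [MetricSpace M]
    [MetricSpace K] [CompactSpace K] [Nonempty K]
    (φ : M ≃ₜ M) (ω : M → ℝ) (hω : Continuous ω)
    (F : K → ℝ → K) (hF : Continuous fun p : K × ℝ => F p.1 p.2)
    (ρ : ℝ) (hρ0 : 0 ≤ ρ) (hρ1 : ρ < 1)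
    (hcontr : ∀ u : ℝ, ∀ h h' : K, dist (F h u) (F h' u) ≤ ρ * dist h h')
    (f : M → K) (hf : ∀ x : M, f (φ x) = F (f x) (ω x)) :
    Continuous f := by
  obtain ⟨h₀⟩ := ‹Nonempty K›
  have hdiam : ∀ x, dist (f x) h₀ ≤ Metric.diam (Set.univ : Set K) := fun x =>
    Metric.dist_le_diam_of_mem isCompact_univ.isBounded (Set.mem_univ _) (Set.mem_univ _)
  have hfix : syncStep φ.symm ω F f = f := syncStep_symm_eq_self (φ := φ.toEquiv) hf
  exact (tendstoUniformly_iterate_syncStep hρ0 hρ1 hcontr hfix hdiam).continuous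
    (Frequently.of_forall
      (continuous_iterate_syncStep φ.continuous_symm hω hF continuous_const))

theorem synchronization_function_continuous
    {M K : Type*} [MetricSpace M] [CompactSpace M]
    [MetricSpace K] [CompactSpace K] [Nonempty K]
    (φ : M ≃ₜ M) (ω : M → ℝ) (hω : Continuous ω)
    (F : K → ℝ → K) (hF : Continuous fun p : K × ℝ => F p.1 p.2)
    (ρ : ℝ) (hρ0 : 0 ≤ ρ) (hρ1 : ρ < 1)
    (hcontr : ∀ u : ℝ, ∀ h h' : K, dist (F h u) (F h' u) ≤ ρ * dist h h')
    (f : M → K) (hf : ∀ x : M, f (φ x) = F (f x) (ω x)) :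
    Continuous f :=
  synchronization_function_continuous_general φ ω hω F hF ρ hρ0 hρ1 hcontr f hf
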